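/- arXiv:1910.01333 — 4 statements merged into one kernel-verified Lean document; each statement's English description precedes it below -/
import Mathlib

section
/- Let 2 ≤ k ≤ n and let f = (f₁,…,f_k) : (ℂ*)ⁿ → ℂᵏ be a polynomial map (fᵢ ∈ ℂ[x₁,…,xₙ]) such that the set Sing J(f) of points x ∈ (ℂ*)ⁿ at which the Jacobian matrix of f has rank < k is a proper algebraic subset of (ℂ*)ⁿ. Then the set C₁(f) of points of ℂᵏ whose fiber under f has codimension one is finite. -/
open MvPolynomial Matrix

/-- `C₁(F)`: the set of points `κ` whose fiber under `F` has codimension one in the torus,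
i.e. contains an irreducible Zariski-closed subset of `(ℂ*)ⁿ` of dimension `n - 1`, namely the
(nonempty) zero set in the torus of an irreducible polynomial `h` which is not a monomial. -/
def C1 {n k : ℕ} (F : (Fin n → ℂ) → Fin k → ℂ) : Set (Fin k → ℂ) :=
  {κ | ∃ h : MvPolynomial (Fin n) ℂ, Irreducible h ∧ 2 ≤ h.support.card ∧
        (∃ x : Fin n → ℂ, (∀ i, x i ≠ 0) ∧ eval x h = 0) ∧
        ∀ x : Fin n → ℂ, (∀ i, x i ≠ 0) → eval x h = 0 → F x = κ}

/-- A `k × n` matrix over `ℂ` of rank at least `k` has an invertible `k × k` submatrix. -/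
private lemma exists_det_ne_zero {k n : ℕ} (A : Matrix (Fin k) (Fin n) ℂ) (hk : k ≤ A.rank) :
    ∃ s : Fin k → Fin n, (A.submatrix id s).det ≠ 0 := by
  classical
  have hr : A.rank = k := le_antisymm (A.rank_le_card_height.trans (by simp)) hk
  have hspan : Submodule.span ℂ (Set.range Aᵀ) = ⊤ := by
    apply Submodule.eq_top_of_finrank_eq
    rw [show Set.range Aᵀ = Set.range A.col from rfl, ← Matrix.rank_eq_finrank_span_cols, hr, Module.finrank_fin_fun]
  obtain ⟨b, hbsub, hbspan, hbli⟩ := exists_linearIndependent ℂ (Set.range Aᵀ)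
  rw [hspan] at hbspan
  let bas : Module.Basis b ℂ (Fin k → ℂ) :=
    Module.Basis.mk hbli (by rw [Subtype.range_coe, hbspan])
  haveI : Fintype b := FiniteDimensional.fintypeBasisIndex bas
  have hcard : Fintype.card b = k := by
    have h1 := Module.finrank_eq_card_basis bas
    rw [Module.finrank_fin_fun] at h1
    omega
  let e : Fin k ≃ b := (Fintype.equivFinOfCardEq hcard).symm
  have hmem : ∀ i : Fin k, ∃ j : Fin n, Aᵀ j = ((e i : Fin k → ℂ)) :=
    fun i => hbsub (e i).2
  choose s hs using hmem
  refine ⟨s, ?_⟩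
  have hcols : (fun i => (A.submatrix id s)ᵀ i) = fun i => ((e i : Fin k → ℂ)) := by
    funext i
    ext r
    simp [Matrix.transpose_apply, Matrix.submatrix_apply, ← hs i]
  have hli : LinearIndependent ℂ fun i => (A.submatrix id s)ᵀ i := by
    rw [hcols]
    exact hbli.comp e e.injective
  have hunit : IsUnit (A.submatrix id s) := Matrix.linearIndependent_cols_iff_isUnit.mp hli
  exact ((Matrix.isUnit_iff_isUnit_det _).mp hunit).ne_zero

/-- Torus Nullstellensatz step: if an irreducible polynomial `h` has a zero in the torus and
a polynomial `g` vanishes at every torus zero of `h`, then `h` divides `g`. -/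
private lemma key_dvd {n : ℕ} (h g : MvPolynomial (Fin n) ℂ) (hirr : Irreducible h)
    (hzero : ∃ x : Fin n → ℂ, (∀ i, x i ≠ 0) ∧ eval x h = 0)
    (hvan : ∀ x : Fin n → ℂ, (∀ i, x i ≠ 0) → eval x h = 0 → eval x g = 0) : h ∣ g := by
  classical
  have hprime : Prime h := (UniqueFactorizationMonoid.irreducible_iff_prime).mp hirr
  set p : MvPolynomial (Fin n) ℂ := ∏ j : Fin n, X j with hp
  have hmem : g * p ∈ vanishingIdeal ℂ (zeroLocus ℂ (Ideal.span {h})) := by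
    rw [mem_vanishingIdeal_iff]
    intro x hx
    change eval x (g * p) = 0
    have hxh : eval x h = 0 := hx h (Ideal.subset_span rfl)
    rw [_root_.map_mul]
    by_cases hx0 : ∀ i, x i ≠ 0
    · rw [hvan x hx0 hxh, zero_mul]
    · push_neg at hx0
      obtain ⟨i, hi⟩ := hx0
      have hpz : eval x p = 0 := by
        rw [hp, _root_.map_prod]
        exact Finset.prod_eq_zero (Finset.mem_univ i) (by rw [eval_X, hi])
      rw [hpz, mul_zero]
  rw [vanishingIdeal_zeroLocus_eq_radical] at hmem
  have hpr : (Ideal.span ({h} : Set (MvPolynomial (Fin n) ℂ))).IsPrime :=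
    (Ideal.span_singleton_prime hirr.ne_zero).mpr hprime
  rw [hpr.radical, Ideal.mem_span_singleton] at hmem
  rcases hprime.2.2 g p hmem with hg | hpdvd
  · exact hg
  · exfalso
    obtain ⟨x, hx0, hxh⟩ := hzero
    obtain ⟨r, hr⟩ := hpdvd
    have hpz : eval x p = 0 := by rw [hr, _root_.map_mul, hxh, zero_mul]
    rw [hp, _root_.map_prod] at hpz
    obtain ⟨i, _, hi⟩ := Finset.prod_eq_zero_iff.mp hpz
    exact hx0 i (by rwa [eval_X] at hi)

/-- If the singular locus `Sing J(f)` of a polynomial map `f : (ℂ*)ⁿ → ℂᵏ` (the locus of the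
torus where the Jacobian matrix `(∂fᵢ/∂xⱼ)` has rank `< k`) is a proper (algebraic) subset of
the torus, then `C₁(f)` is finite. -/
theorem C1_finite {n k : ℕ} (hk2 : 2 ≤ k) (hkn : k ≤ n)
    (f : Fin k → MvPolynomial (Fin n) ℂ)
    (hsing : {x : Fin n → ℂ | (∀ i, x i ≠ 0) ∧
        (Matrix.of fun (i : Fin k) (j : Fin n) => eval x (pderiv j (f i))).rank < k} ≠
      {x : Fin n → ℂ | ∀ i, x i ≠ 0}) :
    (C1 (fun x i => eval x (f i))).Finite := by
  classical
  -- Find a point of the torus where the Jacobian has full rank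
  obtain ⟨x₀, hx₀t, hx₀r⟩ :
      ∃ x : Fin n → ℂ, (∀ i, x i ≠ 0) ∧
        ¬ (Matrix.of fun (i : Fin k) (j : Fin n) => eval x (pderiv j (f i))).rank < k := by
    by_contra hc
    push_neg at hc
    exact hsing (Set.Subset.antisymm (fun x hx => hx.1) (fun x hx => ⟨hx, hc x hx⟩))
  set A : Matrix (Fin k) (Fin n) ℂ :=
    Matrix.of fun (i : Fin k) (j : Fin n) => eval x₀ (pderiv j (f i)) with hA
  obtain ⟨s, hdet⟩ := exists_det_ne_zero A (not_lt.mp hx₀r)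
  -- The distinguished minor of the Jacobian, as a polynomial
  set G : MvPolynomial (Fin n) ℂ :=
    (Matrix.of fun (i j : Fin k) => pderiv (s j) (f i)).det with hG
  have hGx₀ : eval x₀ G = (A.submatrix id s).det := by
    rw [hG, RingHom.map_det]
    have hmm : ((eval x₀).mapMatrix (Matrix.of fun (i j : Fin k) => pderiv (s j) (f i))) =
        (Matrix.of fun (i j : Fin k) => pderiv (s j) (f i)).map (eval x₀) := rfl
    have hms : (Matrix.of fun (i j : Fin k) => pderiv (s j) (f i)).map (eval x₀) =
        A.submatrix id s := by
      ext i j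
      simp [hA]
    rw [hmm, hms]
  have hGne : G ≠ 0 := by
    intro h0
    rw [h0, _root_.map_zero] at hGx₀
    exact hdet hGx₀.symm
  -- covering sets indexed by irreducible factors of `G`
  let P : MvPolynomial (Fin n) ℂ → Set (Fin k → ℂ) := fun p =>
    {κ | ∃ h : MvPolynomial (Fin n) ℂ,
        (∃ x : Fin n → ℂ, (∀ i, x i ≠ 0) ∧ eval x h = 0) ∧
        (∀ x : Fin n → ℂ, (∀ i, x i ≠ 0) → eval x h = 0 →
          (fun x (i : Fin k) => eval x (f i)) x = κ) ∧
        Associated h p}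
  have hPsub : ∀ p, (P p).Subsingleton := by
    intro p κ₁ hκ₁ κ₂ hκ₂
    obtain ⟨h₁, ⟨x, hx0, hxh⟩, hfib₁, ha₁⟩ := hκ₁
    obtain ⟨h₂, -, hfib₂, ha₂⟩ := hκ₂
    obtain ⟨u, hu⟩ := ha₁.trans ha₂.symm
    have hxh₂ : eval x h₂ = 0 := by rw [← hu, _root_.map_mul, hxh, zero_mul]
    rw [← hfib₁ x hx0 hxh, ← hfib₂ x hx0 hxh₂]
  have hcover : C1 (fun x i => eval x (f i)) ⊆
      ⋃ p ∈ ((UniqueFactorizationMonoid.factors G).toFinset :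
        Set (MvPolynomial (Fin n) ℂ)), P p := by
    intro κ hκ
    obtain ⟨h, hirr, -, hzero, hfib⟩ := hκ
    -- `h` divides each `f i - C (κ i)`
    have hdvdf : ∀ i, h ∣ (f i - C (κ i)) := by
      intro i
      apply key_dvd h _ hirr hzero
      intro x hx0 hxh
      have hi : eval x (f i) = κ i := congrFun (hfib x hx0 hxh) i
      rw [_root_.map_sub, eval_C, hi, sub_self]
    choose q hq using hdvdf
    -- `h` divides `G`
    have hdvdG : h ∣ G := by
      apply key_dvd h G hirr hzero
      intro x hx0 hxh
      have hentry : ∀ (i j : Fin k),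
          eval x (pderiv (s j) (f i)) = eval x (q i) * eval x (pderiv (s j) h) := by
        intro i j
        have hf : f i = h * q i + C (κ i) := by
          have := hq i
          linear_combination (this : f i - C (κ i) = h * q i)
        calc eval x (pderiv (s j) (f i))
            = eval x (pderiv (s j) (h * q i + C (κ i))) := by rw [← hf]
          _ = eval x (pderiv (s j) h) * eval x (q i)
                + eval x h * eval x (pderiv (s j) (q i)) := by
              rw [_root_.map_add, pderiv_C, add_zero, pderiv_mul, _root_.map_add, _root_.map_mul, _root_.map_mul]
          _ = eval x (q i) * eval x (pderiv (s j) h) := by rw [hxh]; ring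
      have hmat : (Matrix.of fun (i j : Fin k) => pderiv (s j) (f i)).map (eval x) =
          Matrix.diagonal (fun i => eval x (q i)) *
            Matrix.of (fun (_ j : Fin k) => eval x (pderiv (s j) h)) := by
        ext i j
        rw [Matrix.diagonal_mul]
        simpa using hentry i j
      have h01 : (⟨0, by omega⟩ : Fin k) ≠ ⟨1, by omega⟩ := by
        simp [Fin.ext_iff]
      have hW : (Matrix.of (fun (_ j : Fin k) => eval x (pderiv (s j) h))).det = 0 :=
        Matrix.det_zero_of_row_eq h01 rfl
      have hmm : ((eval x).mapMatrix (Matrix.of fun (i j : Fin k) => pderiv (s j) (f i))) =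
          (Matrix.of fun (i j : Fin k) => pderiv (s j) (f i)).map (eval x) := rfl
      rw [hG, RingHom.map_det, hmm, hmat, Matrix.det_mul, hW, mul_zero]
    obtain ⟨p, hpmem, hassoc⟩ :=
      UniqueFactorizationMonoid.exists_mem_factors_of_dvd hGne hirr hdvdG
    exact Set.mem_biUnion (Finset.mem_coe.mpr (Multiset.mem_toFinset.mpr hpmem))
      ⟨h, hzero, hfib, hassoc⟩
  exact Set.Finite.subset
    (Set.Finite.biUnion ((UniqueFactorizationMonoid.factors G).toFinset.finite_toSet)
      (fun p _ => (hPsub p).finite)) hcover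
end

section
/- Let A, B, and Σ be convex polytopes in ℝⁿ with vertices in ℤⁿ such that Σ = A + B (Minkowski sum). Writing α = |A ∩ ℤⁿ|, β = |B ∩ ℤⁿ|, and σ = |Σ ∩ ℤⁿ|, one has σ ≥ α + β − 1. -/
open Pointwise

/-- The image in `ℝⁿ` of an integer point. -/
def intToR {n : ℕ} (w : Fin n → ℤ) : Fin n → ℝ := fun i => (w i : ℝ)

/-- A convex lattice polytope: the convex hull of a nonempty finite set of integer points. -/
def IsLatticePolytope {n : ℕ} (P : Set (Fin n → ℝ)) : Prop :=
  ∃ V : Finset (Fin n → ℤ), V.Nonempty ∧ P = convexHull ℝ (intToR '' ↑V)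

/-- The number of integer points of a subset of `ℝⁿ`. -/
noncomputable def latticeCount {n : ℕ} (P : Set (Fin n → ℝ)) : ℕ :=
  {w : Fin n → ℤ | intToR w ∈ P}.ncard

lemma intToR_add {n : ℕ} (a b : Fin n → ℤ) : intToR (a + b) = intToR a + intToR b := by
  funext i; simp [intToR]

set_option maxHeartbeats 1000000 in
lemma lattice_finite {n : ℕ} {P : Set (Fin n → ℝ)} (hP : IsLatticePolytope P) :
    {w : Fin n → ℤ | intToR w ∈ P}.Finite := by
  obtain ⟨V, -, rfl⟩ := hP
  have hc : IsCompact (convexHull ℝ (intToR '' (↑V : Set (Fin n → ℤ)))) :=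
    (V.finite_toSet.image intToR).isCompact_convexHull ℝ
  obtain ⟨R, hR⟩ := hc.isBounded.exists_norm_le
  apply Set.Finite.subset (Set.finite_Icc (fun _ : Fin n => (-⌈R⌉ : ℤ)) (fun _ => ⌈R⌉))
  intro w hw
  have hb : ∀ i, |(w i : ℝ)| ≤ R := by
    intro i
    have := norm_le_pi_norm (intToR w) i
    have h2 := hR _ hw
    simp only [intToR, Real.norm_eq_abs] at this
    linarith
  constructor <;> intro i
  · have h1 := (abs_le.mp (hb i)).1
    have : (-⌈R⌉ : ℝ) ≤ (w i : ℝ) := by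
      have := Int.le_ceil R
      linarith
    exact_mod_cast this
  · have h1 := (abs_le.mp (hb i)).2
    have : ((w i : ℝ)) ≤ (⌈R⌉ : ℝ) := le_trans h1 (Int.le_ceil R)
    exact_mod_cast this

lemma lattice_nonempty {n : ℕ} {P : Set (Fin n → ℝ)} (hP : IsLatticePolytope P) :
    {w : Fin n → ℤ | intToR w ∈ P}.Nonempty := by
  obtain ⟨V, ⟨v, hv⟩, rfl⟩ := hP
  exact ⟨v, subset_convexHull ℝ _ ⟨v, by simpa using hv, rfl⟩⟩

lemma digits_zero (K : ℤ) (hK : 0 < K) :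
    ∀ (n : ℕ) (d : Fin n → ℤ), (∀ i, |d i| < K) →
      (∑ i, d i * K ^ (i : ℕ)) = 0 → ∀ i, d i = 0 := by
  intro n
  induction n with
  | zero => intro d _ _ i; exact i.elim0
  | succ m ih =>
    intro d hd hsum i
    have hsplit : (∑ i, d i * K ^ (i : ℕ)) =
        d 0 + K * ∑ i : Fin m, d i.succ * K ^ (i : ℕ) := by
      rw [Fin.sum_univ_succ]
      simp only [Fin.val_succ, pow_succ, Fin.val_zero, pow_zero, mul_one]
      rw [Finset.mul_sum]
      congr 1
      exact Finset.sum_congr rfl fun x _ => by ring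
    rw [hsplit] at hsum
    have hdvd : K ∣ d 0 := ⟨-∑ i : Fin m, d i.succ * K ^ (i : ℕ), by linarith⟩
    have h0 : d 0 = 0 := Int.eq_zero_of_abs_lt_dvd hdvd (hd 0)
    have htail : (∑ i : Fin m, d i.succ * K ^ (i : ℕ)) = 0 := by
      have : K * ∑ i : Fin m, d i.succ * K ^ (i : ℕ) = 0 := by linarith
      exact (mul_eq_zero.mp this).resolve_left (by positivity)
    have := ih (fun i => d i.succ) (fun i => hd i.succ) htail
    exact Fin.cases h0 this i

/-- If `A`, `B`, `Σ` are convex lattice polytopes with `Σ = A + B` (Minkowski sum), then the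
numbers `α = |A ∩ ℤⁿ|`, `β = |B ∩ ℤⁿ|`, `σ = |Σ ∩ ℤⁿ|` satisfy `σ ≥ α + β - 1`. -/
theorem lattice_count_minkowski_ge {n : ℕ} (A B Sig : Set (Fin n → ℝ))
    (hA : IsLatticePolytope A) (hB : IsLatticePolytope B) (hSig : IsLatticePolytope Sig)
    (hsum : Sig = A + B) :
    (latticeCount A : ℤ) + (latticeCount B : ℤ) - 1 ≤ (latticeCount Sig : ℤ) := by
  classical
  have hfA := lattice_finite hA
  have hfB := lattice_finite hB
  have hfS := lattice_finite hSig
  set FA := hfA.toFinset with hFA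
  set FB := hfB.toFinset with hFB
  set FS := hfS.toFinset with hFS
  -- bound on coordinates
  set F : Finset (Fin n → ℤ) := FA ∪ FB with hF
  set M : ℕ := F.sup (fun w => Finset.univ.sup fun i => (w i).natAbs) with hM
  have hbound : ∀ w ∈ F, ∀ i, |w i| ≤ (M : ℤ) := by
    intro w hw i
    have h1 : (w i).natAbs ≤ M :=
      le_trans (Finset.le_sup (f := fun i => (w i).natAbs) (Finset.mem_univ i))
        (Finset.le_sup (f := fun w => Finset.univ.sup fun i => (w i).natAbs) hw)
    rw [Int.abs_eq_natAbs]; exact_mod_cast h1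
  set K : ℤ := 2 * (M : ℤ) + 1 with hK
  have hKpos : 0 < K := by positivity
  set L : (Fin n → ℤ) → ℤ := fun w => ∑ i, w i * K ^ (i : ℕ) with hL
  have hLadd : ∀ a b, L (a + b) = L a + L b := by
    intro a b
    simp only [hL, Pi.add_apply, add_mul]
    rw [Finset.sum_add_distrib]
  have hLinj : ∀ a ∈ F, ∀ b ∈ F, L a = L b → a = b := by
    intro a ha b hb hab
    have hsum0 : (∑ i, (a i - b i) * K ^ (i : ℕ)) = 0 := by
      have h2 : (∑ i, (a i - b i) * K ^ (i : ℕ)) = L a - L b := by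
        simp only [hL, sub_mul, Finset.sum_sub_distrib]
      rw [h2, hab, sub_self]
    have hlt : ∀ i, |a i - b i| < K := by
      intro i
      calc |a i - b i| ≤ |a i| + |b i| := abs_sub _ _
        _ ≤ (M : ℤ) + (M : ℤ) := add_le_add (hbound a ha i) (hbound b hb i)
        _ < K := by linarith
    have := digits_zero K hKpos n _ hlt hsum0
    funext i
    have h3 := this i
    linarith
  -- maximizers
  obtain ⟨as, hasA, hasmax⟩ := FA.exists_max_image L
    (by rw [hFA, Set.Finite.toFinset_nonempty]; exact lattice_nonempty hA)
  obtain ⟨bs, hbsB, hbsmax⟩ := FB.exists_min_image L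
    (by rw [hFB, Set.Finite.toFinset_nonempty]; exact lattice_nonempty hB)
  -- the injected sets
  set X := FA.image (fun a => a + bs) with hX
  set Y := FB.image (fun b => as + b) with hY
  have hmemS : ∀ a ∈ FA, ∀ b ∈ FB, a + b ∈ FS := by
    intro a ha b hb
    rw [hFS, Set.Finite.mem_toFinset]
    rw [hFA, Set.Finite.mem_toFinset] at ha
    rw [hFB, Set.Finite.mem_toFinset] at hb
    show intToR (a + b) ∈ Sig
    rw [intToR_add, hsum]
    exact Set.add_mem_add ha hb
  have hsub : X ∪ Y ⊆ FS := by
    intro x hx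
    rcases Finset.mem_union.mp hx with hx | hx
    · obtain ⟨a, ha, rfl⟩ := Finset.mem_image.mp hx
      exact hmemS a ha bs hbsB
    · obtain ⟨b, hb, rfl⟩ := Finset.mem_image.mp hx
      exact hmemS as hasA b hb
  have hcardX : X.card = FA.card := Finset.card_image_of_injective _ (add_left_injective bs)
  have hcardY : Y.card = FB.card := Finset.card_image_of_injective _ (add_right_injective as)
  have hinter : X ∩ Y ⊆ {as + bs} := by
    intro x hx
    obtain ⟨hx1, hx2⟩ := Finset.mem_inter.mp hx
    obtain ⟨a, ha, rfl⟩ := Finset.mem_image.mp hx1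
    obtain ⟨b, hb, heq⟩ := Finset.mem_image.mp hx2
    have hLeq : L a + L bs = L as + L b := by
      rw [← hLadd, ← hLadd, heq]
    have h1 : L a ≤ L as := hasmax a ha
    have h2 : L bs ≤ L b := hbsmax b hb
    have : L a = L as := by linarith
    have : a = as := hLinj a (Finset.mem_union_left _ ha) as (Finset.mem_union_left _ hasA) this
    simp [this]
  have hinterc : (X ∩ Y).card ≤ 1 := le_trans (Finset.card_le_card hinter) (by simp)
  have hkey := Finset.card_union_add_card_inter X Y
  have hle : (X ∪ Y).card ≤ FS.card := Finset.card_le_card hsub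
  have hcA : latticeCount A = FA.card := by
    rw [hFA, ← Set.ncard_eq_toFinset_card _ hfA]; rfl
  have hcB : latticeCount B = FB.card := by
    rw [hFB, ← Set.ncard_eq_toFinset_card _ hfB]; rfl
  have hcS : latticeCount Sig = FS.card := by
    rw [hFS, ← Set.ncard_eq_toFinset_card _ hfS]; rfl
  have hnat : FA.card + FB.card ≤ FS.card + 1 := by
    rw [← hcardX, ← hcardY, ← hkey]
    exact add_le_add hle hinterc
  have hint : (FA.card : ℤ) + FB.card ≤ (FS.card : ℤ) + 1 := by exact_mod_cast hnat
  rw [hcA, hcB, hcS]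
  linarith
end

section
/- Let h ∈ ℂ[x₁,…,xₙ] be an irreducible polynomial whose support contains at least two distinct exponent vectors (i.e., h is not a monomial), and let g ∈ ℂ[x₁,…,xₙ]. If g(x) = 0 for every point x ∈ (ℂ*)ⁿ with h(x) = 0, then h divides g in ℂ[x₁,…,xₙ]. -/
open MvPolynomial


private lemma mv_unit_eq_C {n : ℕ} (u : MvPolynomial (Fin n) ℂ) (hu : IsUnit u) :
    ∃ c : ℂ, u = C c := by
  induction n with
  | zero => exact ⟨u.coeff 0, u.eq_C_of_isEmpty⟩
  | succ m ih =>
    have hu' : IsUnit (finSuccEquiv ℂ m u) := hu.map (finSuccEquiv ℂ m)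
    obtain ⟨r, hr, hru⟩ := Polynomial.isUnit_iff.mp hu'
    obtain ⟨c, rfl⟩ := ih r hr
    refine ⟨c, (finSuccEquiv ℂ m).injective ?_⟩
    rw [← hru]
    have : (C c : MvPolynomial (Fin (m + 1)) ℂ) = algebraMap ℂ _ c := rfl
    rw [this, AlgEquiv.commutes]
    rfl


private lemma prime_X_mv {n : ℕ} (i : Fin n) : Prime (X i : MvPolynomial (Fin n) ℂ) := by
  cases n with
  | zero => exact i.elim0
  | succ m =>
    have h0 : Prime (X (0 : Fin (m + 1)) : MvPolynomial (Fin (m + 1)) ℂ) := by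
      rw [← MulEquiv.prime_iff (finSuccEquiv ℂ m).toRingEquiv.toMulEquiv]
      have : (finSuccEquiv ℂ m).toRingEquiv.toMulEquiv (X 0)
          = (Polynomial.X : Polynomial (MvPolynomial (Fin m) ℂ)) := finSuccEquiv_X_zero
      rw [this]
      exact Polynomial.prime_X
    rw [← MulEquiv.prime_iff (renameEquiv ℂ (Equiv.swap i 0)).toRingEquiv.toMulEquiv]
    have : (renameEquiv ℂ (Equiv.swap i 0)).toRingEquiv.toMulEquiv (X i)
        = (X (0 : Fin (m + 1)) : MvPolynomial (Fin (m + 1)) ℂ) := by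
      show rename (Equiv.swap i 0) (X i) = _
      rw [rename_X, Equiv.swap_apply_left]
    rw [this]
    exact h0

/-- If `h ∈ ℂ[x₁,…,xₙ]` is irreducible and not a monomial (its support has at least two
elements), and `g` vanishes at every point of the torus `(ℂ*)ⁿ` where `h` vanishes, then `h`
divides `g` in `ℂ[x₁,…,xₙ]`. -/
theorem dvd_of_vanishing_on_torus_zero_locus {n : ℕ} (h g : MvPolynomial (Fin n) ℂ)
    (hirr : Irreducible h) (hsupp : 2 ≤ h.support.card)
    (hvan : ∀ x : Fin n → ℂ, (∀ i, x i ≠ 0) → eval x h = 0 → eval x g = 0) :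
    h ∣ g := by
  have hprime : Prime h := hirr.prime
  -- h divides g * ∏ X i by the Nullstellensatz
  have key : h ∣ g * ∏ i : Fin n, (X i : MvPolynomial (Fin n) ℂ) := by
    have hmem : g * ∏ i : Fin n, (X i : MvPolynomial (Fin n) ℂ) ∈
        vanishingIdeal ℂ (zeroLocus ℂ (Ideal.span {h})) := by
      rw [mem_vanishingIdeal_iff]
      intro x hx
      show eval x (g * ∏ i : Fin n, (X i : MvPolynomial (Fin n) ℂ)) = 0
      have hhx : eval x h = 0 := by
        rw [mem_zeroLocus_iff] at hx
        exact hx h (Ideal.subset_span rfl)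
      by_cases hnz : ∀ i, x i ≠ 0
      · rw [map_mul, hvan x hnz hhx, zero_mul]
      · push_neg at hnz
        obtain ⟨i, hi⟩ := hnz
        rw [map_mul, map_prod]
        rw [Finset.prod_eq_zero (Finset.mem_univ i) (by simp [hi]), mul_zero]
    rw [vanishingIdeal_zeroLocus_eq_radical] at hmem
    have hrad : (Ideal.span {h} : Ideal (MvPolynomial (Fin n) ℂ)).radical = Ideal.span {h} := by
      have : (Ideal.span {h} : Ideal (MvPolynomial (Fin n) ℂ)).IsPrime :=
        (Ideal.span_singleton_prime hprime.ne_zero).mpr hprime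
      exact this.radical
    rw [hrad, Ideal.mem_span_singleton] at hmem
    exact hmem
  -- h does not divide any X i
  have hX : ∀ i : Fin n, ¬ h ∣ (X i : MvPolynomial (Fin n) ℂ) := by
    intro i hdvd
    have hXirr : Irreducible (X i : MvPolynomial (Fin n) ℂ) := (prime_X_mv i).irreducible
    have hassoc : Associated (X i : MvPolynomial (Fin n) ℂ) h :=
      (hirr.associated_of_dvd hXirr hdvd).symm
    obtain ⟨u, hu⟩ := hassoc
    obtain ⟨c, hc⟩ := mv_unit_eq_C (u : MvPolynomial (Fin n) ℂ) u.isUnit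
    have hh : h = C c * X i := by rw [← hu, hc]; ring
    have hcard : h.support.card ≤ 1 := by
      rw [hh, C_mul_X_eq_monomial]
      calc (monomial (Finsupp.single i 1) c).support.card
          ≤ ({Finsupp.single i 1} : Finset _).card :=
            Finset.card_le_card support_monomial_subset
        _ = 1 := Finset.card_singleton _
    omega
  rcases hprime.dvd_mul.mp key with hg | hP
  · exact hg
  · exfalso
    obtain ⟨i, -, hi⟩ := (Prime.dvd_finset_prod_iff hprime _).mp hP
    exact hX i hi
end

section
/- Let n ≥ 2, let u, v ∈ ℕⁿ with u primitive (gcd of coordinates 1) and v not a rational multiple of u, and let P, Q, R ∈ ℂ[t] with R not identically zero. Define the polynomial map f = (f₁, f₂) : (ℂ*)ⁿ → ℂ² by f₁(x) = P(x^u) and f₂(x) = Q(x^u) + x^v · R(x^u). If t₀ ∈ ℂ* satisfies R(t₀) = 0, then the fiber f⁻¹(P(t₀), Q(t₀)) contains the nonempty set {x ∈ (ℂ*)ⁿ : x^u = t₀}, which has dimension n − 1; consequently (P(t₀), Q(t₀)) ∈ C₁(f). -/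
/-! On the torus points with `x^u = t₀` the term `x^v R(x^u)` vanishes, so `f` is constant there.
That set is cut out by `X^u - t₀`, and an irreducible factor of it vanishing at some torus point
(one exists since `u ≠ 0`) cannot be a monomial, so its zero set is a codimension-one piece of the
fiber. -/

open MvPolynomial

theorem exists_prod_pow_eq {K ι : Type*} [Field K] [IsAlgClosed K] [Fintype ι] [DecidableEq ι]
    {u : ι → ℕ} {i : ι} (hi : u i ≠ 0) {t : K} (ht : t ≠ 0) :
    ∃ x : ι → K, (∀ j, x j ≠ 0) ∧ ∏ j, x j ^ u j = t := by
  obtain ⟨z, hz⟩ := IsAlgClosed.exists_pow_nat_eq t (Nat.pos_of_ne_zero hi)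
  have hz0 : z ≠ 0 := by rintro rfl; exact ht (hz ▸ zero_pow hi)
  refine ⟨Pi.mulSingle i z, fun j => ?_, ?_⟩
  · by_cases hji : j = i
    · simpa [hji] using hz0
    · simp [Pi.mulSingle_eq_of_ne hji]
  · rw [Fintype.prod_eq_single i fun j hji => by simp [Pi.mulSingle_eq_of_ne hji]]
    simpa using hz

theorem exists_irreducible_dvd_of_map_eq_zero {α β F : Type*} [CommMonoidWithZero α]
    [WfDvdMonoid α] [MonoidWithZero β] [NoZeroDivisors β] [Nontrivial β] [FunLike F α β]
    [MonoidWithZeroHomClass F α β] (φ : F) {a : α} (ha : a ≠ 0) (hφa : φ a = 0) :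
    ∃ p, Irreducible p ∧ p ∣ a ∧ φ p = 0 := by
  induction a using WfDvdMonoid.induction_on_irreducible with
  | zero => exact absurd rfl ha
  | unit a hunit => exact absurd hφa (hunit.map φ).ne_zero
  | mul a p ha0 hp ih =>
    rcases mul_eq_zero.mp ((map_mul φ p a).symm.trans hφa) with hφp | hφa
    · exact ⟨p, hp, dvd_mul_right p a, hφp⟩
    · obtain ⟨q, hq, hqa, hφq⟩ := ih ha0 hφa
      exact ⟨q, hq, hqa.mul_left p, hφq⟩

theorem MvPolynomial.two_le_card_support_of_eval_eq_zero {σ R : Type*} [CommRing R]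
    [IsDomain R] {p : MvPolynomial σ R} (hp : p ≠ 0) {x : σ → R} (hx : ∀ i, x i ≠ 0)
    (hpx : eval x p = 0) : 2 ≤ p.support.card := by
  have hcard_ne_zero : p.support.card ≠ 0 := by simpa using hp
  have hcard_ne_one : p.support.card ≠ 1 := by
    intro hcard
    obtain ⟨d, hd⟩ := Finset.card_eq_one.mp hcard
    have hcoeff : p.coeff d ≠ 0 := mem_support_iff.mp (hd ▸ Finset.mem_singleton_self d)
    rw [eval_eq, hd, Finset.sum_singleton] at hpx
    exact mul_ne_zero hcoeff (Finset.prod_ne_zero_iff.mpr fun i _ => pow_ne_zero _ (hx i)) hpx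
  omega

theorem point_mem_C1_of_root_general {n : ℕ} (u v : Fin n → ℕ)
    (hu : Finset.univ.gcd u = 1)
    (P Q R : Polynomial ℂ)
    (t₀ : ℂ) (ht₀ : t₀ ≠ 0) (hroot : R.eval t₀ = 0) :
    (∃ x : Fin n → ℂ, (∀ i, x i ≠ 0) ∧ ∏ i, x i ^ u i = t₀) ∧
      (∀ x : Fin n → ℂ, (∀ i, x i ≠ 0) → ∏ i, x i ^ u i = t₀ →
        (![P.eval (∏ i, x i ^ u i),
            Q.eval (∏ i, x i ^ u i) + (∏ i, x i ^ v i) * R.eval (∏ i, x i ^ u i)] :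
          Fin 2 → ℂ) = ![P.eval t₀, Q.eval t₀]) ∧
      ![P.eval t₀, Q.eval t₀] ∈ C1 (fun x : Fin n → ℂ =>
        ![P.eval (∏ i, x i ^ u i),
          Q.eval (∏ i, x i ^ u i) + (∏ i, x i ^ v i) * R.eval (∏ i, x i ^ u i)]) := by
  obtain ⟨i, -, hi⟩ : ∃ i ∈ Finset.univ, u i ≠ 0 := by
    by_contra! h
    simp [Finset.gcd_eq_zero_iff.mpr h] at hu
  obtain ⟨x₀, hx₀, hx₀u⟩ := exists_prod_pow_eq hi ht₀
  have hfiber : ∀ x : Fin n → ℂ, (∀ i, x i ≠ 0) → ∏ i, x i ^ u i = t₀ →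
      (![P.eval (∏ i, x i ^ u i),
          Q.eval (∏ i, x i ^ u i) + (∏ i, x i ^ v i) * R.eval (∏ i, x i ^ u i)] :
        Fin 2 → ℂ) = ![P.eval t₀, Q.eval t₀] := by
    intro x _ hxu
    rw [hxu, hroot, mul_zero, add_zero]
  refine ⟨⟨x₀, hx₀, hx₀u⟩, hfiber, ?_⟩
  set g : MvPolynomial (Fin n) ℂ := ∏ i, X i ^ u i - C t₀
  have heval (x : Fin n → ℂ) : eval x g = ∏ i, x i ^ u i - t₀ := by simp [g]
  have hg0 : g ≠ 0 := by
    intro hg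
    have hprod : ∏ j, (0 : Fin n → ℂ) j ^ u j = 0 :=
      Finset.prod_eq_zero (Finset.mem_univ i) (zero_pow hi)
    have hg_at_zero := heval 0
    rw [hg, map_zero, hprod, zero_sub, eq_comm, neg_eq_zero] at hg_at_zero
    exact ht₀ hg_at_zero
  obtain ⟨h, hirr, hhg, hhx₀⟩ :=
    exists_irreducible_dvd_of_map_eq_zero (eval x₀) hg0 (by rw [heval, hx₀u, sub_self])
  refine ⟨h, hirr, two_le_card_support_of_eval_eq_zero hirr.ne_zero hx₀ hhx₀, ⟨x₀, hx₀, hhx₀⟩,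
    fun x hx hhx => hfiber x hx ?_⟩
  have hgx : eval x g = 0 := zero_dvd_iff.mp (hhx ▸ map_dvd (eval x) hhg)
  exact sub_eq_zero.mp ((heval x).symm.trans hgx)

/-- For `f = (P(x^u), Q(x^u) + x^v R(x^u))` with `u` primitive, `v` not a rational multiple
of `u`, and `R ≠ 0`: if `R(t₀) = 0` for some `t₀ ∈ ℂ*`, then the fiber of `(P(t₀), Q(t₀))`
contains the nonempty codimension-one set `{x ∈ (ℂ*)ⁿ : x^u = t₀}`; consequently
`(P(t₀), Q(t₀)) ∈ C₁(f)`. -/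
theorem point_mem_C1_of_root {n : ℕ} (hn : 2 ≤ n) (u v : Fin n → ℕ)
    (hu : Finset.univ.gcd u = 1)
    (hv : ¬ ∃ q : ℚ, ∀ i, (v i : ℚ) = q * (u i : ℚ))
    (P Q R : Polynomial ℂ) (hR : R ≠ 0)
    (t₀ : ℂ) (ht₀ : t₀ ≠ 0) (hroot : R.eval t₀ = 0) :
    (∃ x : Fin n → ℂ, (∀ i, x i ≠ 0) ∧ ∏ i, x i ^ u i = t₀) ∧
      (∀ x : Fin n → ℂ, (∀ i, x i ≠ 0) → ∏ i, x i ^ u i = t₀ →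
        (![P.eval (∏ i, x i ^ u i),
            Q.eval (∏ i, x i ^ u i) + (∏ i, x i ^ v i) * R.eval (∏ i, x i ^ u i)] :
          Fin 2 → ℂ) = ![P.eval t₀, Q.eval t₀]) ∧
      ![P.eval t₀, Q.eval t₀] ∈ C1 (fun x : Fin n → ℂ =>
        ![P.eval (∏ i, x i ^ u i),
          Q.eval (∏ i, x i ^ u i) + (∏ i, x i ^ v i) * R.eval (∏ i, x i ^ u i)]) :=
  point_mem_C1_of_root_general u v hu P Q R t₀ ht₀ hroot
end
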